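/- (Embedding criterion) A nonempty L-structure M admits an L-embedding into some model of a first-order theory T if and only if M satisfies every universal L-sentence that is a logical consequence of T (i.e., M ⊨ T_∀). -/

import Mathlib

/-!
Universal sentences go down along embeddings, so a substructure of a model of `T` satisfies
`T_∀`. Conversely, by compactness it suffices to satisfy `T` together with one quantifier-free
fact `θ(m̄)` about `M` at a time. If that failed, `T` would prove the universal sentence
`∀ x̄, ¬θ(x̄)`, which then holds in `M ⊨ T_∀`, contradicting `θ(m̄)`. In a model of `T` plus the
quantifier-free diagram of `M`, the constants naming the elements of `M` form an embedding.
-/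

open FirstOrder FirstOrder.Language

universe u v

variable {L : FirstOrder.Language.{u, v}}

/-- A formula is *universal* if it has the form `∀ ȳ, χ` with `χ` quantifier-free. -/
def IsUniversalFormula {α : Type*} (φ : L.Formula α) : Prop :=
  ∃ (n : ℕ) (χ : L.BoundedFormula α n), χ.IsQF ∧ φ = χ.alls

/-- A formula is *existential* if it has the form `∃ ȳ, χ` with `χ` quantifier-free. -/
def IsExistentialFormula {α : Type*} (φ : L.Formula α) : Prop :=
  ∃ (n : ℕ) (χ : L.BoundedFormula α n), χ.IsQF ∧ φ = χ.exs

/-- A theory is *model complete* if every embedding between models of it is elementary. -/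
def IsModelComplete (T : L.Theory) : Prop :=
  ∀ (M N : Type (max u v)) [L.Structure M] [L.Structure N] [Nonempty M] [Nonempty N],
    M ⊨ T → N ⊨ T → ∀ (f : M ↪[L] N) (n : ℕ) (φ : L.Formula (Fin n)) (x : Fin n → M),
      φ.Realize (f ∘ x) ↔ φ.Realize x

/-- `M` is *existentially closed in `N` via* the embedding `f` if every existential formula
with parameters from `M` that holds in `N` (of the images) already holds in `M`. -/
def IsECVia {M N : Type (max u v)} [L.Structure M] [L.Structure N] (f : M ↪[L] N) : Prop :=
  ∀ (k : ℕ) (φ : L.Formula (Fin k)), IsExistentialFormula φ →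
    ∀ x : Fin k → M, φ.Realize (f ∘ x) → φ.Realize x

/-- `M` is *existentially closed for* the theory `T` if `M ⊨ T` and `M` is existentially
closed in every model of `T` via every embedding. -/
def IsECFor (T : L.Theory) (M : Type (max u v)) [L.Structure M] [Nonempty M] : Prop :=
  M ⊨ T ∧ ∀ (N : Type (max u v)) [L.Structure N] [Nonempty N], N ⊨ T →
    ∀ f : M ↪[L] N, IsECVia f

/-- `T_∀` : the set of universal sentences that are logical consequences of `T`. -/
def universalPart (T : L.Theory) : L.Theory :=
  {φ : L.Sentence | IsUniversalFormula φ ∧ T ⊨ᵇ φ}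

/-- `Tstar` is a *model companion* of `T`: `Tstar` is model complete, every model of `T`
embeds into a model of `Tstar`, and every model of `Tstar` embeds into a model of `T`. -/
def IsModelCompanion (T Tstar : L.Theory) : Prop :=
  IsModelComplete Tstar ∧
  (∀ (M : Type (max u v)) [L.Structure M] [Nonempty M], M ⊨ T →
     ∃ (N : Type (max u v)) (_ : L.Structure N) (_ : Nonempty N),
       N ⊨ Tstar ∧ Nonempty (M ↪[L] N)) ∧
  (∀ (M : Type (max u v)) [L.Structure M] [Nonempty M], M ⊨ Tstar →
     ∃ (N : Type (max u v)) (_ : L.Structure N) (_ : Nonempty N),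
       N ⊨ T ∧ Nonempty (M ↪[L] N))

namespace FirstOrder.Language.BoundedFormula

variable {α β : Type*} {n : ℕ}

theorem IsQF.restrictFreeVar [DecidableEq α] {φ : L.BoundedFormula α n} (h : φ.IsQF)
    (f : φ.freeVarFinset → β) : (φ.restrictFreeVar f).IsQF := by
  induction h with
  | falsum => exact isQF_bot
  | of_isAtomic hA =>
    cases hA with
    | equal => exact (IsAtomic.equal _ _).isQF
    | rel => exact (IsAtomic.rel _ _).isQF
  | imp _ _ ih₁ ih₂ => exact (ih₁ _).imp (ih₂ _)

theorem IsUniversal.alls {φ : L.BoundedFormula α n} (h : φ.IsUniversal) :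
    φ.alls.IsUniversal := by
  induction n with
  | zero => exact h
  | succ n ih => exact ih h.all

theorem IsQF.foldr_inf {l : List (L.BoundedFormula α n)} (h : ∀ φ ∈ l, φ.IsQF) :
    (l.foldr (· ⊓ ·) ⊤).IsQF := by
  induction l with
  | nil => exact IsQF.top
  | cons φ l ih =>
    rw [List.forall_mem_cons] at h
    exact h.1.inf (ih h.2)

theorem IsQF.iInf [Finite β] {f : β → L.BoundedFormula α n} (h : ∀ b, (f b).IsQF) :
    (iInf f).IsQF :=
  IsQF.foldr_inf (by simpa using h)

end FirstOrder.Language.BoundedFormula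

namespace FirstOrder.Language.Formula

variable {α : Type*} [DecidableEq α]

noncomputable def allClosure (φ : L.Formula α) : L.Sentence :=
  iAlls φ.freeVarFinset (Formula.relabel Sum.inr (φ.restrictFreeVar id))

theorem realize_allClosure {M : Type*} [L.Structure M] [Nonempty M] (φ : L.Formula α) :
    φ.allClosure.Realize M ↔ ∀ v : α → M, φ.Realize v := by
  simp only [allClosure, Sentence.Realize, realize_iAlls, realize_relabel, Function.comp_def,
    Sum.elim_inr]
  refine ⟨fun h v => ?_, fun h w => ?_⟩
  · exact (BoundedFormula.realize_restrictFreeVar (f := id) (v := v ∘ (↑)) v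
      fun _ => rfl).1 (h _)
  · exact (BoundedFormula.realize_restrictFreeVar (f := id) (v := w)
      (Function.extend Subtype.val w fun _ => Classical.arbitrary M)
      fun a => (Subtype.val_injective.extend_apply w _ a).symm).2 (h _)

theorem isUniversalFormula_allClosure {φ : L.Formula α} (h : φ.IsQF) :
    IsUniversalFormula φ.allClosure :=
  ⟨_, _, ((h.restrictFreeVar id).relabel _).relabel _, rfl⟩

theorem _root_.FirstOrder.Language.Theory.ModelsBoundedFormula.allClosure {T : L.Theory}
    {φ : L.Formula α} (h : T ⊨ᵇ φ) : T ⊨ᵇ φ.allClosure :=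
  Theory.models_sentence_iff.2 fun N => (realize_allClosure φ).2 fun _ => h.realize_formula N

end FirstOrder.Language.Formula

open Structure Formula BoundedFormula

theorem IsUniversalFormula.isUniversal {α : Type*} {φ : L.Formula α}
    (h : IsUniversalFormula φ) : φ.IsUniversal := by
  obtain ⟨n, χ, hχ, rfl⟩ := h
  exact hχ.isUniversal.alls

section UniversalPart

variable (T : L.Theory)

instance : (universalPart T).IsUniversal :=
  ⟨fun _ hφ => hφ.1.isUniversal⟩

theorem models_universalPart (N : Type*) [L.Structure N] [Nonempty N] [N ⊨ T] :
    N ⊨ universalPart T :=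
  (Theory.model_iff _).2 fun _ hφ => hφ.2.realize_sentence N

variable {T}

theorem realize_of_models_universalPart {M : Type*} [L.Structure M] [Nonempty M]
    (hM : M ⊨ universalPart T) {α : Type*} {φ : L.Formula α} (hφ : φ.IsQF) (hT : T ⊨ᵇ φ)
    (v : α → M) : φ.Realize v := by
  classical
  exact (realize_allClosure φ).1
    (hM.realize_of_mem _ ⟨isUniversalFormula_allClosure hφ, hT.allClosure⟩) v

end UniversalPart

namespace FirstOrder.Language

variable (L) in
/-- The quantifier-free diagram of `M`, with each element of `M` as the variable naming itself. -/
def qfDiagram (M : Type*) [L.Structure M] : Set (L.Formula M) :=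
  {θ | θ.IsQF ∧ θ.Realize id}

def Embedding.ofRealizeQFDiagram {M N : Type*} [L.Structure M] [L.Structure N] (f : M → N)
    (hf : ∀ θ ∈ qfDiagram L M, θ.Realize f) : M ↪[L] N where
  toFun := f
  inj' m₁ m₂ h := by
    by_contra hne
    have := hf ((var m₁).equal (var m₂)).not
      ⟨(IsAtomic.equal _ _).isQF.not, by simpa using hne⟩
    simp_all
  map_fun' F x := by
    simpa [Function.comp_def, eq_comm] using hf ((func F fun i => var (x i)).equal
      (var (funMap F x))) ⟨(IsAtomic.equal _ _).isQF, by simp⟩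
  map_rel' R x := by
    by_cases hR : RelMap R x
    · simpa [Function.comp_def, hR] using hf (R.formula fun i => var (x i))
        ⟨(IsAtomic.rel _ _).isQF, by simpa using hR⟩
    · simpa [Function.comp_def, hR] using hf (R.formula fun i => var (x i)).not
        ⟨(IsAtomic.rel _ _).isQF.not, by simpa using hR⟩

end FirstOrder.Language

theorem isSatisfiable_onTheory_union_qfDiagram {T : L.Theory} {M : Type (max u v)}
    [L.Structure M] [Nonempty M] (hM : M ⊨ universalPart T) :
    ((L.lhomWithConstants M).onTheory T ∪ equivSentence '' qfDiagram L M).IsSatisfiable := by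
  rw [Theory.isSatisfiable_iff_isFinitelySatisfiable]
  intro s hs
  set t := qfDiagram L M ∩ equivSentence ⁻¹' s
  have : Finite t :=
    ((s.finite_toSet.preimage equivSentence.injective.injOn).inter_of_right _).to_subtype
  set θ : L.Formula M := Formula.iInf fun ψ : t => ψ.1
  have hθ : θ ∈ qfDiagram L M :=
    ⟨IsQF.iInf fun ψ => ψ.2.1.1, Formula.realize_iInf.2 fun ψ => ψ.2.1.2⟩
  have hθT : ¬ T ⊨ᵇ θ.not := fun hT =>
    realize_of_models_universalPart hM hθ.1.not hT id hθ.2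
  simp only [Theory.models_formula_iff, not_forall, Formula.realize_not, not_not] at hθT
  obtain ⟨N, v, hv⟩ := hθT
  let := constantsOn.structure v
  have : N ⊨ (s : L[[M]].Theory) := (Theory.model_iff _).2 fun φ hφ => by
    rcases hs hφ with hT | ⟨ψ, hψ, rfl⟩
    · exact ((LHom.onTheory_model _ T).2 N.is_model).realize_of_mem φ hT
    · refine (realize_equivSentence_symm N (equivSentence ψ) v).1 ?_
      rw [Equiv.symm_apply_apply]
      exact Formula.realize_iInf.1 hv ⟨ψ, hψ, hφ⟩
  exact Theory.Model.isSatisfiable N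

/-- Embedding criterion: a structure embeds into some model of `T` iff it satisfies all
universal consequences of `T`. -/
theorem embeds_into_model_iff_universalPart (T : L.Theory)
    (M : Type (max u v)) [L.Structure M] [Nonempty M] :
    (∃ (N : Type (max u v)) (_ : L.Structure N) (_ : Nonempty N),
      N ⊨ T ∧ Nonempty (M ↪[L] N)) ↔ M ⊨ universalPart T := by
  refine ⟨fun ⟨N, _, _, hN, ⟨f⟩⟩ => ?_, fun hM => ?_⟩
  · have := models_universalPart T N
    exact Theory.IsUniversal.models_of_embedding f
  · obtain ⟨N⟩ := isSatisfiable_onTheory_union_qfDiagram hM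
    let := (L.lhomWithConstants M).reduct N
    have := LHom.isExpansionOn_reduct (L.lhomWithConstants M) N
    refine ⟨N, inferInstance, inferInstance,
      (LHom.onTheory_model _ T).1 (N.is_model.mono Set.subset_union_left),
      ⟨Embedding.ofRealizeQFDiagram (fun m => (L.con m : N)) fun θ hθ => ?_⟩⟩
    exact (Formula.realize_equivSentence N θ).1
      (N.is_model.realize_of_mem _ (Or.inr ⟨θ, hθ, rfl⟩))
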